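/- Assume the Szegő class condition: for every l ∈ ℕ, the partial products ∏_{p=1}^{m} d_{l,l+p} converge, as m → ∞, to a positive limit. Then for every k, l ∈ ℕ, the sequence n ↦ (φ♯_n)^{(k)}(0,l) converges in ℂ as n → ∞ (the limit exists and is finite). -/

import Mathlib

/-!
Fix `l` and a coefficient index `j`, and write `b n`, `a n` for the `j`-th coefficients of
`φ♯_n(·,l)`, `φ_n(·,l)` and `w n` for the `(j-1)`-th coefficient of `φ_n(·,l+1)` (zero if
`j = 0`). With `d n = d_{l,n+1+l}` and `γ n = γ_{l,n+1+l}` the recurrences read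
`d n * b (n+1) = b n - conj (γ n) * w n` and `d n * a (n+1) = w n - γ n * b n`.
Multiplying the first by `P n = ∏_{m<n} d m` telescopes it, so `P n * b n` converges as soon as
`∑ |γ n| |w n| < ∞`, and then so does `b n` since `P n → g > 0`. The Szegő condition gives
`∑ |γ n|² = ∑ (1 - d n²) ≤ -2 log g`, so it suffices that `w` is square summable; the second
recurrence with `d n ≥ g` then makes `a` square summable. Induction on `j` (with `l` varying)
propagates square summability, and `(φ♯_n)^{(k)}(0, l) = k! · coeff_k φ♯_n(·,l)`.
-/

open Polynomial Filter Finset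

/-- The complementary quantity `d_{k,j} = (1 - |γ_{k,j}|²)^{1/2}`. -/
noncomputable def dd (γ : ℕ → ℕ → ℂ) (k j : ℕ) : ℝ :=
  Real.sqrt (1 - ‖γ k j‖ ^ 2)

/-- The pair `(φ_n(·,l), φ♯_n(·,l))` of Szegő-type orthogonal polynomials attached to the
Schur parameters `γ` and the diagonal `s`, defined by the recurrences
`φ_n(X,l) = d_{l,n+l}⁻¹ (X φ_{n-1}(X,l+1) - γ_{l,n+l} φ♯_{n-1}(X,l))` and
`φ♯_n(X,l) = d_{l,n+l}⁻¹ (-conj(γ_{l,n+l}) X φ_{n-1}(X,l+1) + φ♯_{n-1}(X,l))`,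
with `φ_0(X,l) = φ♯_0(X,l) = s_l^{-1/2}`. -/
noncomputable def phiPair (s : ℕ → ℝ) (γ : ℕ → ℕ → ℂ) : ℕ → ℕ → Polynomial ℂ × Polynomial ℂ
  | 0, l => (Polynomial.C (((Real.sqrt (s l))⁻¹ : ℝ) : ℂ),
             Polynomial.C (((Real.sqrt (s l))⁻¹ : ℝ) : ℂ))
  | n + 1, l =>
      (Polynomial.C (((dd γ l (n + 1 + l))⁻¹ : ℝ) : ℂ) *
         (Polynomial.X * (phiPair s γ n (l + 1)).1 -
           Polynomial.C (γ l (n + 1 + l)) * (phiPair s γ n l).2),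
       Polynomial.C (((dd γ l (n + 1 + l))⁻¹ : ℝ) : ℂ) *
         (-(Polynomial.C ((starRingEnd ℂ) (γ l (n + 1 + l))) * Polynomial.X *
             (phiPair s γ n (l + 1)).1) +
           (phiPair s γ n l).2))

/-- The orthogonal polynomial `φ_n(X,l)`. -/
noncomputable def phi (s : ℕ → ℝ) (γ : ℕ → ℕ → ℂ) (n l : ℕ) : Polynomial ℂ :=
  (phiPair s γ n l).1

/-- The reversed polynomial `φ♯_n(X,l)`. -/
noncomputable def phiSharp (s : ℕ → ℝ) (γ : ℕ → ℕ → ℂ) (n l : ℕ) : Polynomial ℂ :=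
  (phiPair s γ n l).2

/-- The determinant `D_{r,q} = (∏_{k=r}^q s_k) ∏_{r ≤ k < j ≤ q} d_{k,j}²` of the positive
definite kernel associated with the parameters `γ`. -/
noncomputable def Ddet (s : ℕ → ℝ) (γ : ℕ → ℕ → ℂ) (r q : ℕ) : ℝ :=
  (∏ k ∈ Finset.Icc r q, s k) *
    ∏ k ∈ Finset.Icc r q, ∏ j ∈ Finset.Icc (k + 1) q, (dd γ k j) ^ 2

open scoped Topology ComplexConjugate Nat

section SquareSummable

variable {ι : Type*} {x y f : ι → ℝ}

lemma summable_mul_of_summable_sq (hx0 : ∀ i, 0 ≤ x i) (hy0 : ∀ i, 0 ≤ y i)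
    (hx : Summable fun i => x i ^ 2) (hy : Summable fun i => y i ^ 2) :
    Summable fun i => x i * y i :=
  (hx.add hy).of_nonneg_of_le (fun i => mul_nonneg (hx0 i) (hy0 i)) fun i => by
    nlinarith [two_mul_le_add_sq (x i) (y i), mul_nonneg (hx0 i) (hy0 i)]

lemma summable_sq_of_le_add (hx : Summable fun i => x i ^ 2) (hy : Summable fun i => y i ^ 2)
    (hf0 : ∀ i, 0 ≤ f i) (hf : ∀ i, f i ≤ x i + y i) : Summable fun i => f i ^ 2 :=
  ((hx.add hy).mul_left 2).of_nonneg_of_le (fun i => sq_nonneg _) fun i => by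
    nlinarith [pow_le_pow_left₀ (hf0 i) (hf i) 2, sq_nonneg (x i - y i)]

end SquareSummable

section SzegoRecursion

variable {d : ℕ → ℝ} {g : ℝ}

lemma antitone_prod_range (hd0 : ∀ n, 0 ≤ d n) (hd1 : ∀ n, d n ≤ 1) :
    Antitone fun n => ∏ m ∈ range n, d m :=
  antitone_nat_of_succ_le fun n => by
    rw [prod_range_succ]
    exact mul_le_of_le_one_right (prod_nonneg fun m _ => hd0 m) (hd1 n)

lemma le_prod_range_of_tendsto (hd0 : ∀ n, 0 ≤ d n) (hd1 : ∀ n, d n ≤ 1)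
    (hP : Tendsto (fun n => ∏ m ∈ range n, d m) atTop (𝓝 g)) (n : ℕ) :
    g ≤ ∏ m ∈ range n, d m :=
  (antitone_prod_range hd0 hd1).le_of_tendsto hP n

lemma le_of_tendsto_prod_range (hd0 : ∀ n, 0 ≤ d n) (hd1 : ∀ n, d n ≤ 1)
    (hP : Tendsto (fun n => ∏ m ∈ range n, d m) atTop (𝓝 g)) (n : ℕ) : g ≤ d n :=
  calc g ≤ ∏ m ∈ range (n + 1), d m := le_prod_range_of_tendsto hd0 hd1 hP (n + 1)
    _ = (∏ m ∈ range n, d m) * d n := prod_range_succ d n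
    _ ≤ d n := mul_le_of_le_one_left (hd0 n) (prod_le_one (fun m _ => hd0 m) fun m _ => hd1 m)

lemma summable_one_sub_sq_of_tendsto_prod_range (hd0 : ∀ n, 0 < d n) (hd1 : ∀ n, d n ≤ 1)
    (hg : 0 < g) (hP : Tendsto (fun n => ∏ m ∈ range n, d m) atTop (𝓝 g)) :
    Summable fun n => 1 - d n ^ 2 := by
  refine summable_of_sum_range_le (c := -2 * Real.log g)
    (fun n => by nlinarith [hd0 n, hd1 n]) fun n => ?_
  -- `1 - x ^ 2 ≤ -log (x ^ 2)`
  calc ∑ m ∈ range n, (1 - d m ^ 2) ≤ ∑ m ∈ range n, -2 * Real.log (d m) :=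
        sum_le_sum fun m _ => by
          have := Real.log_le_sub_one_of_pos (pow_pos (hd0 m) 2)
          rw [Real.log_pow] at this
          push_cast at this
          linarith
    _ = -2 * Real.log (∏ m ∈ range n, d m) := by
        rw [Real.log_prod fun m _ => (hd0 m).ne', mul_sum]
    _ ≤ -2 * Real.log g := by
        linarith [Real.log_le_log hg (le_prod_range_of_tendsto (fun m => (hd0 m).le) hd1 hP n)]

lemma exists_tendsto_of_recurrence {b e : ℕ → ℂ} (hd0 : ∀ n, 0 < d n) (hd1 : ∀ n, d n ≤ 1)
    (hg : g ≠ 0) (hP : Tendsto (fun n => ∏ m ∈ range n, d m) atTop (𝓝 g))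
    (he : Summable fun n => ‖e n‖) (hb : ∀ n, b (n + 1) = (d n : ℂ)⁻¹ * (b n - e n)) :
    ∃ c, Tendsto b atTop (𝓝 c) := by
  set P : ℕ → ℂ := fun n => ((∏ m ∈ range n, d m : ℝ) : ℂ)
  have hP0 n : P n ≠ 0 := Complex.ofReal_ne_zero.2 (prod_pos fun m _ => hd0 m).ne'
  have htel n : P n * b n = b 0 - ∑ m ∈ range n, P m * e m := by
    induction n with
    | zero => simp [P]
    | succ n ih =>
      rw [sum_range_succ, ← sub_sub, ← ih, hb n]
      have hdn : (d n : ℂ) ≠ 0 := Complex.ofReal_ne_zero.2 (hd0 n).ne'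
      simp only [P, prod_range_succ, Complex.ofReal_mul]
      field_simp
  have hPe : Summable fun m => P m * e m := by
    refine Summable.of_norm_bounded he fun m => ?_
    rw [norm_mul, Complex.norm_real, Real.norm_of_nonneg (prod_nonneg fun k _ => (hd0 k).le)]
    exact mul_le_of_le_one_left (norm_nonneg _) (prod_le_one (fun k _ => (hd0 k).le) fun k _ => hd1 k)
  have hPb : Tendsto (fun n => P n * b n) atTop (𝓝 (b 0 - ∑' m, P m * e m)) := by
    simpa only [htel] using tendsto_const_nhds.sub hPe.hasSum.tendsto_sum_nat
  have hPg : Tendsto P atTop (𝓝 (g : ℂ)) := (Complex.continuous_ofReal.tendsto g).comp hP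
  refine ⟨(g : ℂ)⁻¹ * (b 0 - ∑' m, P m * e m),
    ((hPg.inv₀ (by exact_mod_cast hg)).mul hPb).congr fun n => ?_⟩
  field_simp [hP0 n]

theorem szego_recursion_step {γ w a b : ℕ → ℂ} (hd0 : ∀ n, 0 < d n)
    (hdγ : ∀ n, d n ^ 2 = 1 - ‖γ n‖ ^ 2) (hg : 0 < g)
    (hP : Tendsto (fun n => ∏ m ∈ range n, d m) atTop (𝓝 g))
    (hw : Summable fun n => ‖w n‖ ^ 2)
    (hb : ∀ n, b (n + 1) = (d n : ℂ)⁻¹ * (b n - conj (γ n) * w n))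
    (ha : ∀ n, a (n + 1) = (d n : ℂ)⁻¹ * (w n - γ n * b n)) :
    (∃ c, Tendsto b atTop (𝓝 c)) ∧ Summable fun n => ‖a n‖ ^ 2 := by
  have hd1 n : d n ≤ 1 := by nlinarith [hdγ n, norm_nonneg (γ n), hd0 n]
  have hγ : Summable fun n => ‖γ n‖ ^ 2 :=
    (summable_one_sub_sq_of_tendsto_prod_range hd0 hd1 hg hP).congr fun n => by rw [hdγ n]; ring
  have hγw : Summable fun n => ‖conj (γ n) * w n‖ := by
    simpa only [norm_mul, Complex.norm_conj] using
      summable_mul_of_summable_sq (fun n => norm_nonneg _) (fun n => norm_nonneg _) hγ hw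
  obtain ⟨c, hc⟩ := exists_tendsto_of_recurrence hd0 hd1 hg.ne' hP hγw hb
  obtain ⟨B, hB⟩ : ∃ B, ∀ n, ‖b n‖ ≤ B := by
    obtain ⟨B, hB⟩ := hc.norm.isBoundedUnder_le.bddAbove_range
    exact ⟨B, fun n => hB ⟨n, rfl⟩⟩
  have ha_le n : ‖a (n + 1)‖ ≤ g⁻¹ * ‖w n‖ + g⁻¹ * B * ‖γ n‖ :=
    calc ‖a (n + 1)‖ = (d n)⁻¹ * ‖w n - γ n * b n‖ := by
          rw [ha, norm_mul, norm_inv, Complex.norm_real, Real.norm_of_nonneg (hd0 n).le]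
      _ ≤ g⁻¹ * (‖w n‖ + ‖γ n‖ * B) := by
          refine mul_le_mul (inv_anti₀ hg (le_of_tendsto_prod_range (fun m => (hd0 m).le) hd1 hP n))
            ((norm_sub_le _ _).trans ?_) (norm_nonneg _) (inv_nonneg.2 hg.le)
          rw [norm_mul]
          gcongr
          exact hB n
      _ = g⁻¹ * ‖w n‖ + g⁻¹ * B * ‖γ n‖ := by ring
  refine ⟨⟨c, hc⟩, (summable_nat_add_iff (f := fun n => ‖a n‖ ^ 2) 1).1 ?_⟩
  have hw' : Summable fun n => (g⁻¹ * ‖w n‖) ^ 2 :=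
    (hw.mul_left (g⁻¹ ^ 2)).congr fun n => by ring
  have hγ' : Summable fun n => (g⁻¹ * B * ‖γ n‖) ^ 2 :=
    (hγ.mul_left ((g⁻¹ * B) ^ 2)).congr fun n => by ring
  exact summable_sq_of_le_add hw' hγ' (fun n => norm_nonneg _) ha_le

end SzegoRecursion

section SzegoPolynomials

variable (s : ℕ → ℝ) (γ : ℕ → ℕ → ℂ)

lemma dd_sq {k j : ℕ} (h : ‖γ k j‖ ≤ 1) : dd γ k j ^ 2 = 1 - ‖γ k j‖ ^ 2 :=
  Real.sq_sqrt (by nlinarith [norm_nonneg (γ k j)])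

lemma dd_pos {k j : ℕ} (h : ‖γ k j‖ < 1) : 0 < dd γ k j :=
  Real.sqrt_pos.2 (by nlinarith [norm_nonneg (γ k j)])

lemma prod_Icc_dd_eq_prod_range (l m : ℕ) :
    ∏ p ∈ Icc 1 m, dd γ l (l + p) = ∏ n ∈ range m, dd γ l (n + 1 + l) := by
  induction m with
  | zero => rfl
  | succ m ih => rw [prod_Icc_succ_top (by omega), prod_range_succ, ih, add_comm l]

lemma phiSharp_succ_coeff (n l j : ℕ) :
    (phiSharp s γ (n + 1) l).coeff j = (dd γ l (n + 1 + l) : ℂ)⁻¹ *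
      ((phiSharp s γ n l).coeff j - conj (γ l (n + 1 + l)) * (X * phi s γ n (l + 1)).coeff j) := by
  simp only [phiSharp, phi, phiPair, coeff_C_mul, coeff_add, coeff_neg, mul_assoc,
    Complex.ofReal_inv]
  ring

lemma phi_succ_coeff (n l j : ℕ) :
    (phi s γ (n + 1) l).coeff j = (dd γ l (n + 1 + l) : ℂ)⁻¹ *
      ((X * phi s γ n (l + 1)).coeff j - γ l (n + 1 + l) * (phiSharp s γ n l).coeff j) := by
  simp only [phiSharp, phi, phiPair, coeff_C_mul, coeff_sub, Complex.ofReal_inv]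

theorem tendsto_phiSharp_coeff_and_summable_phi_coeff (hγ : ∀ k j, k < j → ‖γ k j‖ < 1)
    (hSzego : ∀ l, ∃ g : ℝ, 0 < g ∧
      Tendsto (fun m => ∏ p ∈ Icc 1 m, dd γ l (l + p)) atTop (𝓝 g)) (j l : ℕ) :
    (∃ c, Tendsto (fun n => (phiSharp s γ n l).coeff j) atTop (𝓝 c)) ∧
      Summable fun n => ‖(phi s γ n l).coeff j‖ ^ 2 := by
  have hstep j l (hw : Summable fun n => ‖(X * phi s γ n (l + 1)).coeff j‖ ^ 2) :
      (∃ c, Tendsto (fun n => (phiSharp s γ n l).coeff j) atTop (𝓝 c)) ∧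
        Summable fun n => ‖(phi s γ n l).coeff j‖ ^ 2 := by
    obtain ⟨g, hg, hP⟩ := hSzego l
    have hγl n : ‖γ l (n + 1 + l)‖ < 1 := hγ _ _ (by omega)
    rw [funext (prod_Icc_dd_eq_prod_range γ l)] at hP
    have step := szego_recursion_step (d := fun n => dd γ l (n + 1 + l)) (g := g)
      (γ := fun n => γ l (n + 1 + l)) (w := fun n => (X * phi s γ n (l + 1)).coeff j)
      (a := fun n => (phi s γ n l).coeff j) (b := fun n => (phiSharp s γ n l).coeff j)
    exact step (fun n => dd_pos γ (hγl n)) (fun n => dd_sq γ (hγl n).le) hg hP hw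
      (fun n => phiSharp_succ_coeff s γ n l j) (fun n => phi_succ_coeff s γ n l j)
  induction j generalizing l with
  | zero => exact hstep 0 l (by simp [mul_coeff_zero])
  | succ j ih => exact hstep (j + 1) l (by simpa only [coeff_X_mul] using (ih (l + 1)).2)

end SzegoPolynomials

theorem phiSharp_derivative_tendsto_general (s : ℕ → ℝ) (γ : ℕ → ℕ → ℂ)
    (hγ : ∀ k j, k < j → ‖γ k j‖ < 1)
    (hSzego : ∀ l, ∃ g : ℝ, 0 < g ∧
      Filter.Tendsto (fun m => ∏ p ∈ Finset.Icc 1 m, dd γ l (l + p)) Filter.atTop (nhds g))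
    (k l : ℕ) :
    ∃ c : ℂ, Filter.Tendsto (fun n => (Polynomial.derivative^[k] (phiSharp s γ n l)).eval 0)
      Filter.atTop (nhds c) := by
  obtain ⟨⟨c, hc⟩, -⟩ := tendsto_phiSharp_coeff_and_summable_phi_coeff s γ hγ hSzego k l
  refine ⟨(k ! : ℂ) * c, (hc.const_mul _).congr fun n => ?_⟩
  rw [← coeff_zero_eq_eval_zero, coeff_iterate_derivative, zero_add, Nat.descFactorial_self,
    nsmul_eq_mul]

/-- Under the Szegő class condition (for every `l`, the partial products `∏_{p=1}^m d_{l,l+p}`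
converge to a positive limit), for every `k, l ∈ ℕ` the sequence `n ↦ (φ♯_n)^{(k)}(0,l)`
converges in `ℂ` as `n → ∞`. -/
theorem phiSharp_derivative_tendsto (s : ℕ → ℝ) (γ : ℕ → ℕ → ℂ)
    (hs : ∀ l, 0 < s l) (hγ : ∀ k j, k < j → ‖γ k j‖ < 1)
    (hSzego : ∀ l, ∃ g : ℝ, 0 < g ∧
      Filter.Tendsto (fun m => ∏ p ∈ Finset.Icc 1 m, dd γ l (l + p)) Filter.atTop (nhds g))
    (k l : ℕ) :
    ∃ c : ℂ, Filter.Tendsto (fun n => (Polynomial.derivative^[k] (phiSharp s γ n l)).eval 0)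
      Filter.atTop (nhds c) :=
  phiSharp_derivative_tendsto_general s γ hγ hSzego k l
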